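/- Let I be a compact topological space and let the semigroup G be represented on the complex Banach space X by uniformly bounded right amenable semigroups 𝒮_i = {S_{i,g} : g ∈ G}, i ∈ I. Let {(A_α^{𝒮_i})_{α∈𝒜} : i ∈ I} be a uniform family of right ergodic nets and let x ∈ X. Assume that (a) for each i ∈ I the semigroup 𝒮_i is mean ergodic on the closed linear span of the orbit 𝒮_i x, with mean ergodic projection P_i, and (b) for each α ∈ 𝒜 the map I → ℝ₊, i ↦ ‖A_α^{𝒮_i} x − P_i x‖, is continuous. Then limsup_α sup_{i∈I} ‖A_α^{𝒮_i} x − P_i x‖ = 0. -/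
import Mathlib


open Filter Topology

noncomputable section

/-- The strong operator topology on `X →L[ℂ] X`: the topology induced by the
inclusion into the product `X → X` (pointwise norm convergence). -/
def sot (X : Type) [NormedAddCommGroup X] [NormedSpace ℂ X] :
    TopologicalSpace (X →L[ℂ] X) :=
  TopologicalSpace.induced (fun T : X →L[ℂ] X => (T : X → X)) inferInstance

/-- `𝒮 = {S_g : g ∈ G}`, endowed with the strong operator topology and operator
multiplication (note `S_h S_g = S_{g h}`), is right amenable: there is a mean `m` on
`C_b(𝒮)` (a continuous linear functional with `⟨m, 1⟩ = ‖m‖ = 1`) which is right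
invariant, i.e. `⟨m, R_T f⟩ = ⟨m, f⟩` for all `T ∈ 𝒮`, where `R_{S_g} f (S_h) = f (S_h S_g)
= f (S_{g h})`. -/
def RightAmenable {G X : Type} [Mul G] [NormedAddCommGroup X] [NormedSpace ℂ X]
    (S : G → (X →L[ℂ] X)) : Prop :=
  letI : TopologicalSpace (X →L[ℂ] X) := sot X
  ∃ m : BoundedContinuousFunction (Set.range S) ℂ →L[ℂ] ℂ,
    m (BoundedContinuousFunction.const _ (1 : ℂ)) = 1 ∧ ‖m‖ = 1 ∧
    ∀ (g : G) (f f' : BoundedContinuousFunction (Set.range S) ℂ),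
      (∀ h : G, f' ⟨S h, ⟨h, rfl⟩⟩ = f ⟨S (g * h), ⟨g * h, rfl⟩⟩) → m f' = m f

/-- A uniform family `{(A_α^{𝒮_i})_{α ∈ ι} : i ∈ I}` of right ergodic nets
(Definition 2.1). -/
def UniformFamilyRightErgodic {I G ι X : Type} [Preorder ι]
    [NormedAddCommGroup X] [NormedSpace ℂ X]
    (S : I → G → (X →L[ℂ] X)) (A : I → ι → (X →L[ℂ] X)) : Prop :=
  (∀ (α : ι) (ε : ℝ), 0 < ε → ∀ (m : ℕ) (xs : Fin m → X),
      ∃ (N : ℕ) (g : Fin N → G) (c : I → Fin N → ℝ),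
        (∀ i j, 0 ≤ c i j) ∧ (∀ i, ∑ j, c i j = 1) ∧
        ∀ (i : I) (k : Fin m),
          ‖A i α (xs k) - ∑ j, c i j • S i (g j) (xs k)‖ < ε) ∧
  (∀ (g : G) (x : X),
      Tendsto (fun α : ι => ⨆ i : I, ‖A i α x - A i α (S i g x)‖) atTop (nhds 0))

/-- Theorem 2.4. Let `I` be compact, let the `𝒮_i`, `i ∈ I`, be
uniformly bounded right amenable representations of `G` on `X`, and let
`{(A_α^{𝒮_i})_α : i ∈ I}` be a uniform family of right ergodic nets.  Let `x ∈ X` and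
assume that (a) each `𝒮_i` is mean ergodic on `closure (lin 𝒮_i x)` with mean ergodic
projection `P_i` (equivalently, by Proposition 1.11: the value `P_i x` lies in
`co̅(𝒮_i x) ∩ Fix 𝒮_i`) and (b) `i ↦ ‖A_α^{𝒮_i} x - P_i x‖` is continuous for each `α`.
Then `limsup_α sup_i ‖A_α^{𝒮_i} x - P_i x‖ = 0`. -/
theorem uniform_convergence_of_uniformFamily
    {I G X 𝒜 : Type} [TopologicalSpace I] [CompactSpace I]
    [Semigroup G] [TopologicalSpace G]
    [NormedAddCommGroup X] [NormedSpace ℂ X] [CompleteSpace X]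
    [Preorder 𝒜] [Nonempty 𝒜] [IsDirected 𝒜 (· ≤ ·)]
    (S : I → G → (X →L[ℂ] X))
    (hGcont₁ : ∀ g : G, Continuous fun h : G => g * h)
    (hGcont₂ : ∀ g : G, Continuous fun h : G => h * g)
    (hbdd : ∃ C : ℝ, ∀ (i : I) (g : G), ‖S i g‖ ≤ C)
    (hmul : ∀ (i : I) (g h : G), (S i g).comp (S i h) = S i (h * g))
    (hScont : ∀ (i : I) (x : X), Continuous fun g : G => S i g x)
    (hamen : ∀ i : I, RightAmenable (S i))
    (A : I → 𝒜 → (X →L[ℂ] X))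
    (hA : UniformFamilyRightErgodic S A)
    (x : X)
    -- `P i` is the value at `x` of the mean ergodic projection of `𝒮_i` on the closed
    -- linear span of the orbit `𝒮_i x`; it is characterised by membership in
    -- `co̅(𝒮_i x) ∩ Fix 𝒮_i` (hypothesis (a) of Theorem 2.4, via Proposition 1.11).
    (P : I → X)
    (ha : ∀ i : I,
      P i ∈ closure (convexHull ℝ (Set.range fun g : G => S i g x)) ∧
      ∀ g : G, S i g (P i) = P i)
    (hb : ∀ α : 𝒜, Continuous fun i : I => ‖A i α x - P i‖) :
    Tendsto (fun α : 𝒜 => ⨆ i : I, ‖A i α x - P i‖) atTop (nhds 0) := by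
  classical
  obtain ⟨C₀, hC₀⟩ := hbdd
  set C : ℝ := max C₀ 0 with hCdef
  have hC : 0 ≤ C := le_max_right _ _
  have hSC : ∀ (i : I) (g : G), ‖S i g‖ ≤ C := fun i g => (hC₀ i g).trans (le_max_left _ _)
  -- pointwise bound on the ergodic nets
  have hAbd : ∀ (i : I) (α : 𝒜) (y : X), ‖A i α y‖ ≤ C * ‖y‖ := by
    intro i α y
    refine le_of_forall_pos_le_add fun ε hε => ?_
    obtain ⟨N, g, c, hc0, hc1, hlt⟩ := hA.1 α ε hε 1 (fun _ => y)
    have h0 := hlt i 0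
    have hsum : ‖∑ j, c i j • S i (g j) y‖ ≤ C * ‖y‖ := by
      calc ‖∑ j, c i j • S i (g j) y‖ ≤ ∑ j, ‖c i j • S i (g j) y‖ := norm_sum_le _ _
        _ ≤ ∑ j, c i j * (C * ‖y‖) := by
            refine Finset.sum_le_sum fun j _ => ?_
            rw [norm_smul, Real.norm_eq_abs, abs_of_nonneg (hc0 i j)]
            exact mul_le_mul_of_nonneg_left (((S i (g j)).le_opNorm y).trans
              (mul_le_mul_of_nonneg_right (hSC i (g j)) (norm_nonneg y))) (hc0 i j)
        _ = C * ‖y‖ := by rw [← Finset.sum_mul, hc1 i, one_mul]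
    calc ‖A i α y‖
        = ‖(A i α y - ∑ j, c i j • S i (g j) y) + ∑ j, c i j • S i (g j) y‖ := by
          rw [sub_add_cancel]
      _ ≤ ‖A i α y - ∑ j, c i j • S i (g j) y‖ + ‖∑ j, c i j • S i (g j) y‖ :=
          norm_add_le _ _
      _ ≤ ε + (C * ‖y‖) := add_le_add h0.le hsum
      _ = C * ‖y‖ + ε := add_comm _ _
  -- the nets fix every P i
  have hAP : ∀ (i : I) (α : 𝒜), A i α (P i) = P i := by
    intro i α
    have key : ∀ ε : ℝ, 0 < ε → ‖A i α (P i) - P i‖ < ε := by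
      intro ε hε
      obtain ⟨N, g, c, hc0, hc1, hlt⟩ := hA.1 α ε hε 1 (fun _ => P i)
      have h0 := hlt i 0
      have hPsum : ∑ j, c i j • S i (g j) (P i) = P i := by
        rw [Finset.sum_congr rfl (fun j _ => by rw [(ha i).2 (g j)]),
          ← Finset.sum_smul, hc1 i, one_smul]
      rwa [hPsum] at h0
    have h0 : ‖A i α (P i) - P i‖ ≤ 0 := le_of_forall_pos_le_add fun ε hε => by
      simpa using (key ε hε).le
    exact sub_eq_zero.mp (norm_eq_zero.mp (le_antisymm h0 (norm_nonneg _)))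
  -- individual terms are bounded by the supremum appearing in condition (2)
  have hle_sup : ∀ (g : G) (β : 𝒜) (j : I),
      ‖A j β x - A j β (S j g x)‖ ≤ ⨆ m : I, ‖A m β x - A m β (S m g x)‖ := by
    intro g β j
    refine le_ciSup (f := fun m : I => ‖A m β x - A m β (S m g x)‖) ⟨C * ‖x‖ + C * (C * ‖x‖), ?_⟩ j
    rintro r ⟨m, rfl⟩
    calc ‖A m β x - A m β (S m g x)‖ ≤ ‖A m β x‖ + ‖A m β (S m g x)‖ := norm_sub_le _ _
      _ ≤ C * ‖x‖ + C * (C * ‖x‖) := by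
          refine add_le_add (hAbd m β x) ((hAbd m β _).trans ?_)
          exact mul_le_mul_of_nonneg_left (((S m g).le_opNorm x).trans
            (mul_le_mul_of_nonneg_right (hSC m g) (norm_nonneg x))) hC
  have hatTop : (atTop : Filter 𝒜).NeBot := atTop_neBot_iff.mpr ⟨inferInstance, inferInstance⟩
  -- pointwise convergence
  have hpt : ∀ (i : I) (ε : ℝ), 0 < ε → ∃ α : 𝒜, ‖A i α x - P i‖ < ε := by
    intro i ε hε
    have hε2 : 0 < ε / (C + 2) := by positivity
    obtain ⟨y, hy, hdist⟩ := Metric.mem_closure_iff.mp (ha i).1 _ hε2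
    rw [convexHull_eq] at hy
    obtain ⟨ι, t, w, z, hw0, hw1, hz, hzy⟩ := hy
    have hy' : y = ∑ k ∈ t, w k • z k := by
      rw [← hzy, Finset.centerMass_eq_of_sum_1 _ _ hw1]
    have htne : t.Nonempty := Finset.nonempty_of_sum_ne_zero (by rw [hw1]; exact one_ne_zero)
    obtain ⟨k₀, hk₀⟩ := htne
    have hGne : Nonempty G := ⟨(hz k₀ hk₀).choose⟩
    have hz2 : ∀ k : ι, ∃ g : G, k ∈ t → S i g x = z k := fun k => by
      by_cases hk : k ∈ t
      · obtain ⟨g, hg⟩ := hz k hk; exact ⟨g, fun _ => hg⟩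
      · exact ⟨Classical.arbitrary G, fun h => absurd h hk⟩
    choose gz hgz using hz2
    have hev : ∀ᶠ α in atTop, ∀ k ∈ t,
        (⨆ m : I, ‖A m α x - A m α (S m (gz k) x)‖) < ε / (C + 2) := by
      rw [eventually_all_finset]
      intro k _
      exact (hA.2 (gz k) x).eventually_lt_const hε2
    obtain ⟨α, hα⟩ := hev.exists
    refine ⟨α, ?_⟩
    have h1 : ∑ k ∈ t, w k • (A i α x - A i α (z k)) = A i α x - A i α y := by
      have e1 : A i α y = ∑ k ∈ t, w k • A i α (z k) := by
        rw [hy', map_sum]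
        exact Finset.sum_congr rfl fun k _ => (A i α).map_smul_of_tower _ _
      rw [e1, Finset.sum_congr rfl
          (fun k _ => smul_sub (w k) (A i α x) (A i α (z k))),
        Finset.sum_sub_distrib, ← Finset.sum_smul, hw1, one_smul]
    have h2 : ‖A i α x - A i α y‖ ≤ ε / (C + 2) := by
      rw [← h1]
      calc ‖∑ k ∈ t, w k • (A i α x - A i α (z k))‖
          ≤ ∑ k ∈ t, w k * ‖A i α x - A i α (z k)‖ := by
            refine (norm_sum_le _ _).trans (Finset.sum_le_sum fun k hk => ?_)
            rw [norm_smul, Real.norm_eq_abs, abs_of_nonneg (hw0 k hk)]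
        _ ≤ ∑ k ∈ t, w k * (ε / (C + 2)) := by
            refine Finset.sum_le_sum fun k hk => mul_le_mul_of_nonneg_left ?_ (hw0 k hk)
            rw [← hgz k hk]
            exact (hle_sup (gz k) α i).trans (hα k hk).le
        _ = ε / (C + 2) := by rw [← Finset.sum_mul, hw1, one_mul]
    have h3 : ‖A i α y - P i‖ ≤ C * (ε / (C + 2)) := by
      have e2 : A i α y - P i = A i α (y - P i) := by rw [map_sub, hAP]
      rw [e2]
      refine (hAbd i α _).trans (mul_le_mul_of_nonneg_left ?_ hC)
      have e3 : ‖y - P i‖ = dist (P i) y := by rw [dist_comm, dist_eq_norm]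
      rw [e3]; exact hdist.le
    calc ‖A i α x - P i‖ = ‖(A i α x - A i α y) + (A i α y - P i)‖ := by
          rw [sub_add_sub_cancel]
      _ ≤ ‖A i α x - A i α y‖ + ‖A i α y - P i‖ := norm_add_le _ _
      _ ≤ ε / (C + 2) + C * (ε / (C + 2)) := add_le_add h2 h3
      _ < ε := by
          have hmc : (ε / (C + 2)) * (C + 2) = ε := div_mul_cancel₀ ε (by positivity)
          nlinarith [hε2]
  -- transfer estimate
  have htrans : ∀ (α' : 𝒜) (δ : ℝ), 0 < δ →
      ∀ᶠ β in atTop, ∀ j : I, ‖A j β x - A j β (A j α' x)‖ ≤ δ := by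
    intro α' δ hδ
    have hδ2 : 0 < δ / (C + 2) := by positivity
    obtain ⟨N, g, c, hc0, hc1, hlt⟩ := hA.1 α' (δ / (C + 2)) hδ2 1 (fun _ => x)
    have hev : ∀ᶠ β in atTop, ∀ l : Fin N,
        (⨆ m : I, ‖A m β x - A m β (S m (g l) x)‖) < δ / (C + 2) := by
      rw [eventually_all]
      intro l
      exact (hA.2 (g l) x).eventually_lt_const hδ2
    filter_upwards [hev] with β hβ
    intro j
    have h1 : ‖A j β (∑ l, c j l • S j (g l) x) - A j β (A j α' x)‖ ≤ C * (δ / (C + 2)) := by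
      rw [← map_sub]
      refine (hAbd j β _).trans (mul_le_mul_of_nonneg_left ?_ hC)
      rw [norm_sub_rev]
      exact (hlt j 0).le
    have h2 : A j β x - A j β (∑ l, c j l • S j (g l) x)
        = ∑ l, c j l • (A j β x - A j β (S j (g l) x)) := by
      have e1 : A j β (∑ l, c j l • S j (g l) x) = ∑ l, c j l • A j β (S j (g l) x) := by
        rw [map_sum]
        exact Finset.sum_congr rfl fun l _ => (A j β).map_smul_of_tower _ _
      rw [e1, Finset.sum_congr rfl
          (fun l _ => smul_sub (c j l) (A j β x) (A j β (S j (g l) x))),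
        Finset.sum_sub_distrib, ← Finset.sum_smul, hc1 j, one_smul]
    have h3 : ‖A j β x - A j β (∑ l, c j l • S j (g l) x)‖ ≤ δ / (C + 2) := by
      rw [h2]
      calc ‖∑ l, c j l • (A j β x - A j β (S j (g l) x))‖
          ≤ ∑ l, c j l * ‖A j β x - A j β (S j (g l) x)‖ := by
            refine (norm_sum_le _ _).trans (Finset.sum_le_sum fun l _ => ?_)
            rw [norm_smul, Real.norm_eq_abs, abs_of_nonneg (hc0 j l)]
        _ ≤ ∑ l, c j l * (δ / (C + 2)) := by
            refine Finset.sum_le_sum fun l _ => mul_le_mul_of_nonneg_left ?_ (hc0 j l)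
            exact (hle_sup (g l) β j).trans (hβ l).le
        _ = δ / (C + 2) := by rw [← Finset.sum_mul, hc1 j, one_mul]
    calc ‖A j β x - A j β (A j α' x)‖
        = ‖(A j β x - A j β (∑ l, c j l • S j (g l) x))
            + (A j β (∑ l, c j l • S j (g l) x) - A j β (A j α' x))‖ := by
          rw [sub_add_sub_cancel]
      _ ≤ ‖A j β x - A j β (∑ l, c j l • S j (g l) x)‖
            + ‖A j β (∑ l, c j l • S j (g l) x) - A j β (A j α' x)‖ := norm_add_le _ _
      _ ≤ δ / (C + 2) + C * (δ / (C + 2)) := add_le_add h3 h1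
      _ ≤ δ := by
          have hmc : (δ / (C + 2)) * (C + 2) = δ := div_mul_cancel₀ δ (by positivity)
          nlinarith [hδ2.le]
  -- main argument
  rcases isEmpty_or_nonempty I with hI | hI
  · have heq : (fun α : 𝒜 => ⨆ i : I, ‖A i α x - P i‖) = fun _ => (0 : ℝ) := by
      funext α; exact Real.iSup_of_isEmpty _
    rw [heq]
    exact tendsto_const_nhds
  rw [Metric.tendsto_nhds]
  intro ε hε
  have hε' : 0 < ε / (C + 2) := by positivity
  have hch : ∀ i : I, ∃ α : 𝒜, ‖A i α x - P i‖ < ε / (C + 2) := fun i => hpt i _ hε'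
  choose αi hαi using hch
  have hUopen : ∀ i : I, IsOpen {j : I | ‖A j (αi i) x - P j‖ < ε / (C + 2)} :=
    fun i => isOpen_lt (hb (αi i)) continuous_const
  have hcover : (Set.univ : Set I) ⊆ ⋃ i : I, {j | ‖A j (αi i) x - P j‖ < ε / (C + 2)} :=
    fun j _ => Set.mem_iUnion.mpr ⟨j, hαi j⟩
  obtain ⟨s, hs⟩ := isCompact_univ.elim_finite_subcover _ hUopen hcover
  have hev : ∀ᶠ β in atTop, ∀ i ∈ s, ∀ j : I,
      ‖A j β x - A j β (A j (αi i) x)‖ ≤ ε / (C + 2) := by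
    rw [eventually_all_finset]
    intro i _
    exact htrans (αi i) _ hε'
  filter_upwards [hev] with β hβ
  have hbound : ∀ j : I, ‖A j β x - P j‖ ≤ ε / (C + 2) + C * (ε / (C + 2)) := by
    intro j
    obtain ⟨i, his, hji⟩ : ∃ i ∈ s, ‖A j (αi i) x - P j‖ < ε / (C + 2) := by
      have hj := hs (Set.mem_univ j)
      simp only [Set.mem_iUnion, Set.mem_setOf_eq] at hj
      obtain ⟨i, his, hji⟩ := hj
      exact ⟨i, his, hji⟩
    calc ‖A j β x - P j‖
        = ‖(A j β x - A j β (A j (αi i) x)) + (A j β (A j (αi i) x) - P j)‖ := by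
          rw [sub_add_sub_cancel]
      _ ≤ ‖A j β x - A j β (A j (αi i) x)‖ + ‖A j β (A j (αi i) x) - P j‖ := norm_add_le _ _
      _ ≤ ε / (C + 2) + C * (ε / (C + 2)) := by
          refine add_le_add (hβ i his j) ?_
          have e1 : A j β (A j (αi i) x) - P j = A j β (A j (αi i) x - P j) := by
            rw [map_sub, hAP j β]
          rw [e1]
          exact (hAbd j β _).trans (mul_le_mul_of_nonneg_left hji.le hC)
  have hnn : 0 ≤ ⨆ j : I, ‖A j β x - P j‖ := Real.iSup_nonneg fun j => norm_nonneg _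
  have hub : (⨆ j : I, ‖A j β x - P j‖) ≤ ε / (C + 2) + C * (ε / (C + 2)) :=
    Real.iSup_le hbound (by positivity)
  rw [dist_zero_right, Real.norm_eq_abs, abs_of_nonneg hnn]
  have hmc : (ε / (C + 2)) * (C + 2) = ε := div_mul_cancel₀ ε (by positivity)
  nlinarith [hε', hub]
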